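/- Equi-satisfiable diamond-elimination for Krom clauses: let φ = φ₀ ∧ ∇(◇_α λ ∨ μ) be a Krom formula over alphabet P, where λ is a positive literal and μ a literal, and let p ∉ P be fresh. Define φ' = φ₀ ∧ ∇(¬□_α p ∨ μ) ∧ ∇□_α(p ∨ λ). Then for every model M over P and world w: M,w ⊩ φ iff there exists an extension M' of M to P ∪ {p} with M',w ⊩ φ'. -/

import Mathlib

/-- A Kripke model: accessibility relations indexed by `ι`, valuation over letters `P`. -/
structure KModel (ι P W : Type) where
  rel : ι → W → W → Prop
  val : W → P → Prop

/-- General positive literals: `⊤ | p | ◇_a λ | □_a λ`. -/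
inductive PLit (ι P : Type) : Type
  | top : PLit ι P
  | atom : P → PLit ι P
  | dia : ι → PLit ι P → PLit ι P
  | box : ι → PLit ι P → PLit ι P

/-- Positive box-literals: `⊤ | p | □_a λ`. -/
inductive BLit (ι P : Type) : Type
  | top : BLit ι P
  | atom : P → BLit ι P
  | box : ι → BLit ι P → BLit ι P

/-- Positive diamond-literals: `⊤ | p | ◇_a λ`. -/
inductive DLit (ι P : Type) : Type
  | top : DLit ι P
  | atom : P → DLit ι P
  | dia : ι → DLit ι P → DLit ι P

def PLit.sat {ι P W : Type} (M : KModel ι P W) : W → PLit ι P → Prop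
  | _, .top => True
  | w, .atom p => M.val w p
  | w, .dia a l => ∃ v, M.rel a w v ∧ PLit.sat M v l
  | w, .box a l => ∀ v, M.rel a w v → PLit.sat M v l

def BLit.sat {ι P W : Type} (M : KModel ι P W) : W → BLit ι P → Prop
  | _, .top => True
  | w, .atom p => M.val w p
  | w, .box a l => ∀ v, M.rel a w v → BLit.sat M v l

def DLit.sat {ι P W : Type} (M : KModel ι P W) : W → DLit ι P → Prop
  | _, .top => True
  | w, .atom p => M.val w p
  | w, .dia a l => ∃ v, M.rel a w v ∧ DLit.sat M v l

/-- Satisfaction of a property behind a prefix `∇` of universal modalities. -/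
def nablaSat {ι P W : Type} (M : KModel ι P W) : List ι → W → (W → Prop) → Prop
  | [], w, Φ => Φ w
  | a :: rest, w, Φ => ∀ v, M.rel a w v → nablaSat M rest v Φ

/-- A Horn clause `∇(λ₁ ∧ … ∧ λₙ → μ)` with general positive literals;
`concl = none` encodes the consequent `⊥`. -/
structure HornClause (ι P : Type) where
  nabla : List ι
  ante : List (PLit ι P)
  concl : Option (PLit ι P)

def HornClause.sat {ι P W : Type} (M : KModel ι P W) (w : W) (c : HornClause ι P) : Prop :=
  nablaSat M c.nabla w fun v =>
    (∀ l ∈ c.ante, PLit.sat M v l) → c.concl.elim False fun l => PLit.sat M v l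

def hornSat {ι P W : Type} (M : KModel ι P W) (w : W) (φ : List (HornClause ι P)) : Prop :=
  ∀ c ∈ φ, c.sat M w

/-- A Horn-box clause: positive literals use boxes only. -/
structure HornBoxClause (ι P : Type) where
  nabla : List ι
  ante : List (BLit ι P)
  concl : Option (BLit ι P)

def HornBoxClause.sat {ι P W : Type} (M : KModel ι P W) (w : W) (c : HornBoxClause ι P) : Prop :=
  nablaSat M c.nabla w fun v =>
    (∀ l ∈ c.ante, BLit.sat M v l) → c.concl.elim False fun l => BLit.sat M v l

def hornBoxSat {ι P W : Type} (M : KModel ι P W) (w : W) (φ : List (HornBoxClause ι P)) : Prop :=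
  ∀ c ∈ φ, c.sat M w

/-- A Horn-diamond clause: positive literals use diamonds only. -/
structure HornDiaClause (ι P : Type) where
  nabla : List ι
  ante : List (DLit ι P)
  concl : Option (DLit ι P)

def HornDiaClause.sat {ι P W : Type} (M : KModel ι P W) (w : W) (c : HornDiaClause ι P) : Prop :=
  nablaSat M c.nabla w fun v =>
    (∀ l ∈ c.ante, DLit.sat M v l) → c.concl.elim False fun l => DLit.sat M v l

def hornDiaSat {ι P W : Type} (M : KModel ι P W) (w : W) (φ : List (HornDiaClause ι P)) : Prop :=
  ∀ c ∈ φ, c.sat M w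

/-- A signed literal: a positive literal or its negation (`pos = false`). -/
structure SLit (ι P : Type) where
  pos : Bool
  lit : PLit ι P

def SLit.sat {ι P W : Type} (M : KModel ι P W) (w : W) (l : SLit ι P) : Prop :=
  if l.pos then PLit.sat M w l.lit else ¬ PLit.sat M w l.lit

/-- A Krom clause `∇(ℓ₁ ∨ ℓ₂)`; `l2 = none` encodes a unit clause. -/
structure KromClause (ι P : Type) where
  nabla : List ι
  l1 : SLit ι P
  l2 : Option (SLit ι P)

def KromClause.sat {ι P W : Type} (M : KModel ι P W) (w : W) (c : KromClause ι P) : Prop :=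
  nablaSat M c.nabla w fun v =>
    SLit.sat M v c.l1 ∨ c.l2.elim False fun l => SLit.sat M v l

def kromSat {ι P W : Type} (M : KModel ι P W) (w : W) (φ : List (KromClause ι P)) : Prop :=
  ∀ c ∈ φ, c.sat M w

/-- A signed box-literal. -/
structure SBLit (ι P : Type) where
  pos : Bool
  lit : BLit ι P

def SBLit.sat {ι P W : Type} (M : KModel ι P W) (w : W) (l : SBLit ι P) : Prop :=
  if l.pos then BLit.sat M w l.lit else ¬ BLit.sat M w l.lit

/-- A Krom-box clause. -/
structure KromBoxClause (ι P : Type) where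
  nabla : List ι
  l1 : SBLit ι P
  l2 : Option (SBLit ι P)

def KromBoxClause.sat {ι P W : Type} (M : KModel ι P W) (w : W) (c : KromBoxClause ι P) : Prop :=
  nablaSat M c.nabla w fun v =>
    SBLit.sat M v c.l1 ∨ c.l2.elim False fun l => SBLit.sat M v l

def kromBoxSat {ι P W : Type} (M : KModel ι P W) (w : W) (φ : List (KromBoxClause ι P)) : Prop :=
  ∀ c ∈ φ, c.sat M w

/-- A signed diamond-literal. -/
structure SDLit (ι P : Type) where
  pos : Bool
  lit : DLit ι P

def SDLit.sat {ι P W : Type} (M : KModel ι P W) (w : W) (l : SDLit ι P) : Prop :=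
  if l.pos then DLit.sat M w l.lit else ¬ DLit.sat M w l.lit

/-- A Krom-diamond clause. -/
structure KromDiaClause (ι P : Type) where
  nabla : List ι
  l1 : SDLit ι P
  l2 : Option (SDLit ι P)

def KromDiaClause.sat {ι P W : Type} (M : KModel ι P W) (w : W) (c : KromDiaClause ι P) : Prop :=
  nablaSat M c.nabla w fun v =>
    SDLit.sat M v c.l1 ∨ c.l2.elim False fun l => SDLit.sat M v l

def kromDiaSat {ι P W : Type} (M : KModel ι P W) (w : W) (φ : List (KromDiaClause ι P)) : Prop :=
  ∀ c ∈ φ, c.sat M w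

/-- Renaming of propositional letters in a positive literal. -/
def PLit.map {ι P Q : Type} (f : P → Q) : PLit ι P → PLit ι Q
  | .top => .top
  | .atom p => .atom (f p)
  | .dia a l => .dia a (PLit.map f l)
  | .box a l => .box a (PLit.map f l)

def SLit.map {ι P Q : Type} (f : P → Q) (l : SLit ι P) : SLit ι Q :=
  ⟨l.pos, l.lit.map f⟩

def KromClause.map {ι P Q : Type} (f : P → Q) (c : KromClause ι P) : KromClause ι Q :=
  ⟨c.nabla, c.l1.map f, c.l2.map (SLit.map f)⟩

/-- The letter `q` occurs in the positive literal. -/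
def PLit.occurs {ι P : Type} (q : P) : PLit ι P → Prop
  | .top => False
  | .atom r => r = q
  | .dia _ l => PLit.occurs q l
  | .box _ l => PLit.occurs q l

/-- A positive literal containing no propositional letters. -/
def PLit.letterFree {ι P : Type} : PLit ι P → Prop
  | .top => True
  | .atom _ => False
  | .dia _ l => PLit.letterFree l
  | .box _ l => PLit.letterFree l

/-- The letter `q` occurs in the Krom clause. -/
def KromClause.occurs {ι P : Type} (c : KromClause ι P) (q : P) : Prop :=
  PLit.occurs q c.l1.lit ∨ c.l2.elim False fun l => PLit.occurs q l.lit

/-! Interpret the fresh letter `p` as `¬λ`. Then `◇_α λ` at a world gives `¬□_α p` there, and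
`p ∨ λ` holds everywhere. Conversely, `¬□_α p` yields an `α`-successor where `p` fails, and
`□_α(p ∨ λ)` forces `λ` there. The clauses of `φ₀` do not mention `p`, so extending the
valuation does not change their truth. -/

section Nabla

variable {ι P Q W : Type}

theorem nablaSat_mono {rel : ι → W → W → Prop} {V : W → P → Prop} {V' : W → Q → Prop}
    {Φ Ψ : W → Prop} (h : ∀ v, Φ v → Ψ v) :
    ∀ {l : List ι} {w : W}, nablaSat ⟨rel, V⟩ l w Φ → nablaSat ⟨rel, V'⟩ l w Ψ
  | [], w, hw => h w hw
  | _ :: _, _, hw => fun v hv => nablaSat_mono h (hw v hv)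

theorem nablaSat_congr {rel : ι → W → W → Prop} {V : W → P → Prop} {V' : W → Q → Prop}
    {Φ Ψ : W → Prop} (h : ∀ v, Φ v ↔ Ψ v) {l : List ι} {w : W} :
    nablaSat ⟨rel, V⟩ l w Φ ↔ nablaSat ⟨rel, V'⟩ l w Ψ :=
  ⟨nablaSat_mono fun v => (h v).1, nablaSat_mono fun v => (h v).2⟩

theorem nablaSat_of_forall (M : KModel ι P W) {Φ : W → Prop} (h : ∀ v, Φ v) :
    ∀ (l : List ι) (w : W), nablaSat M l w Φ
  | [], w => h w
  | _ :: l, _ => fun v _ => nablaSat_of_forall M h l v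

theorem nablaSat_and (M : KModel ι P W) (Φ Ψ : W → Prop) :
    ∀ (l : List ι) (w : W),
      nablaSat M l w (fun v => Φ v ∧ Ψ v) ↔ nablaSat M l w Φ ∧ nablaSat M l w Ψ
  | [], _ => Iff.rfl
  | _ :: l, _ => by
    simp only [nablaSat, nablaSat_and M Φ Ψ l]
    exact forall₂_and

theorem nablaSat_append_singleton (M : KModel ι P W) (a : ι) (Φ : W → Prop) :
    ∀ (l : List ι) (w : W),
      nablaSat M (l ++ [a]) w Φ ↔ nablaSat M l w fun v => ∀ u, M.rel a v u → Φ u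
  | [], _ => Iff.rfl
  | _ :: l, _ => by simp only [List.cons_append, nablaSat, nablaSat_append_singleton M a Φ l]

end Nabla

section Literals

variable {ι P W : Type} (M : KModel ι P W) (w : W) (l : PLit ι P)

@[simp]
theorem SLit.sat_pos : SLit.sat M w ⟨true, l⟩ ↔ PLit.sat M w l := Iff.rfl

@[simp]
theorem SLit.sat_neg : SLit.sat M w ⟨false, l⟩ ↔ ¬ PLit.sat M w l := Iff.rfl

end Literals

section Renaming

variable {ι P Q W : Type} {rel : ι → W → W → Prop} {V : W → P → Prop} {V' : W → Q → Prop}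
  {f : P → Q}

theorem PLit.sat_map (hf : ∀ u q, V' u (f q) ↔ V u q) :
    ∀ (l : PLit ι P) (u : W), PLit.sat ⟨rel, V'⟩ u (l.map f) ↔ PLit.sat ⟨rel, V⟩ u l
  | .top, _ => Iff.rfl
  | .atom q, u => hf u q
  | .dia _ l, _ => exists_congr fun v => and_congr Iff.rfl (PLit.sat_map hf l v)
  | .box _ l, _ => forall_congr' fun v => imp_congr Iff.rfl (PLit.sat_map hf l v)

theorem SLit.sat_map (hf : ∀ u q, V' u (f q) ↔ V u q) (l : SLit ι P) (u : W) :
    SLit.sat ⟨rel, V'⟩ u (l.map f) ↔ SLit.sat ⟨rel, V⟩ u l := by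
  simp only [SLit.sat, SLit.map, PLit.sat_map hf]

theorem KromClause.sat_map (hf : ∀ u q, V' u (f q) ↔ V u q) (c : KromClause ι P) (w : W) :
    KromClause.sat ⟨rel, V'⟩ w (c.map f) ↔ KromClause.sat ⟨rel, V⟩ w c := by
  obtain ⟨nab, l1, l2⟩ := c
  apply nablaSat_congr fun v => ?_
  cases l2 <;> simp only [KromClause.map, Option.map, Option.elim, SLit.sat_map hf]

theorem kromSat_map (hf : ∀ u q, V' u (f q) ↔ V u q) (φ : List (KromClause ι P)) (w : W) :
    kromSat ⟨rel, V'⟩ w (φ.map (KromClause.map f)) ↔ kromSat ⟨rel, V⟩ w φ := by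
  simp only [kromSat, List.forall_mem_map, KromClause.sat_map hf]

end Renaming

section KromSat

variable {ι P W : Type} (M : KModel ι P W) (w : W)

theorem kromSat_append (φ ψ : List (KromClause ι P)) :
    kromSat M w (φ ++ ψ) ↔ kromSat M w φ ∧ kromSat M w ψ :=
  List.forall_mem_append

theorem kromSat_cons (c : KromClause ι P) (φ : List (KromClause ι P)) :
    kromSat M w (c :: φ) ↔ c.sat M w ∧ kromSat M w φ :=
  List.forall_mem_cons

theorem kromSat_nil : kromSat M w [] :=
  fun _ h => absurd h List.not_mem_nil

end KromSat

def extendVal {W P : Type} (V : W → P → Prop) (p : W → Prop) : W → Option P → Prop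
  | u, none => p u
  | u, some q => V u q

theorem extendVal_some {W P : Type} (V : W → P → Prop) (p : W → Prop) (u : W) (q : P) :
    extendVal V p u (some q) ↔ V u q :=
  Iff.rfl

section DiamondElimination

variable {ι P W : Type} {rel : ι → W → W → Prop} {a : ι} {nab : List ι} {lam : PLit ι P}
  {mu : SLit ι P} {w : W}

theorem sat_notBoxFresh_of_sat_dia {V : W → P → Prop}
    (h : KromClause.sat ⟨rel, V⟩ w ⟨nab, ⟨true, .dia a lam⟩, some mu⟩) :
    KromClause.sat ⟨rel, extendVal V fun u => ¬ PLit.sat ⟨rel, V⟩ u lam⟩ w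
      ⟨nab, ⟨false, .box a (.atom none)⟩, some (mu.map some)⟩ := by
  refine nablaSat_mono (fun v hv => ?_) h
  simp only [SLit.sat_pos, SLit.sat_neg, PLit.sat, Option.elim,
    SLit.sat_map (extendVal_some V _)] at hv ⊢
  exact hv.imp_left fun ⟨u, hu, hlam⟩ hbox => hbox u hu hlam

theorem sat_boxFreshOrLam (V : W → P → Prop) :
    KromClause.sat ⟨rel, extendVal V fun u => ¬ PLit.sat ⟨rel, V⟩ u lam⟩ w
      ⟨nab ++ [a], ⟨true, .atom none⟩, some ⟨true, lam.map some⟩⟩ := by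
  refine nablaSat_of_forall _ (fun v => ?_) _ _
  simp only [SLit.sat_pos, PLit.sat, Option.elim, PLit.sat_map (extendVal_some V _)]
  exact (em _).symm

theorem sat_dia_of_sat_fresh {V : W → P → Prop} {V' : W → Option P → Prop}
    (hV' : ∀ u q, V' u (some q) ↔ V u q)
    (h₁ : KromClause.sat ⟨rel, V'⟩ w ⟨nab, ⟨false, .box a (.atom none)⟩, some (mu.map some)⟩)
    (h₂ : KromClause.sat ⟨rel, V'⟩ w ⟨nab ++ [a], ⟨true, .atom none⟩, some ⟨true, lam.map some⟩⟩) :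
    KromClause.sat ⟨rel, V⟩ w ⟨nab, ⟨true, .dia a lam⟩, some mu⟩ := by
  rw [KromClause.sat, nablaSat_append_singleton] at h₂
  refine nablaSat_mono (fun v hv => ?_) ((nablaSat_and _ _ _ _ _).2 ⟨h₁, h₂⟩)
  simp only [SLit.sat_pos, SLit.sat_neg, PLit.sat, Option.elim, PLit.sat_map hV',
    SLit.sat_map hV'] at hv ⊢
  obtain ⟨hbox | hmu, hfresh_or_lam⟩ := hv
  · push Not at hbox
    obtain ⟨u, hu, hnfresh⟩ := hbox
    exact .inl ⟨u, hu, (hfresh_or_lam u hu).resolve_left hnfresh⟩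
  · exact .inr hmu

end DiamondElimination

/-- The alphabet `P` is extended to `Option P`, the fresh letter `p` being `none`. -/
theorem krom_dia_elimination {ι P : Type} (a : ι) (nab : List ι)
    (lam : PLit ι P) (mu : SLit ι P) (φ₀ : List (KromClause ι P)) :
    ∀ (W : Type) (rel : ι → W → W → Prop) (V : W → P → Prop) (w : W),
      kromSat ⟨rel, V⟩ w (φ₀ ++ [⟨nab, ⟨true, .dia a lam⟩, some mu⟩]) ↔
      ∃ V' : W → Option P → Prop,
        (∀ u q, V' u (some q) ↔ V u q) ∧
        kromSat ⟨rel, V'⟩ w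
          (φ₀.map (KromClause.map some) ++
            [⟨nab, ⟨false, .box a (.atom none)⟩, some (mu.map some)⟩,
             ⟨nab ++ [a], ⟨true, .atom none⟩, some ⟨true, lam.map some⟩⟩]) := by
  intro W rel V w
  simp only [kromSat_append, kromSat_cons, kromSat_nil, and_true]
  constructor
  · rintro ⟨h₀, hdia⟩
    refine ⟨_, extendVal_some V fun u => ¬ PLit.sat ⟨rel, V⟩ u lam, ?_,
      sat_notBoxFresh_of_sat_dia hdia, sat_boxFreshOrLam V⟩
    rwa [kromSat_map (extendVal_some V _)]
  · rintro ⟨V', hV', h₀, h₁, h₂⟩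
    exact ⟨(kromSat_map hV' φ₀ w).1 h₀, sat_dia_of_sat_fresh hV' h₁ h₂⟩
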